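/- Let 𝔽 be a field, X a countably infinite set, K a fully invariant multihomogeneous ideal of the free nonassociative algebra 𝓕(X) over 𝔽, F = 𝓕(X)/K, I an ideal of F, P = F/I, and ε : F → P the canonical surjective algebra homomorphism. Then for every derivation d of P there exists a derivation d̄ of F such that ε ∘ d̄ = d ∘ ε; in particular, d̄ maps the kernel of ε into itself. -/

import Mathlib

noncomputable section

open Function

/-- A (two-sided) ideal of a non-unital non-associative algebra: a submodule closed under
left and right multiplication by arbitrary elements. -/
def IsAlgIdeal (𝔽 : Type*) [Semiring 𝔽] {A : Type*} [NonUnitalNonAssocSemiring A]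
    [Module 𝔽 A] (I : Submodule 𝔽 A) : Prop :=
  ∀ a b : A, b ∈ I → a * b ∈ I ∧ b * a ∈ I

/-- A derivation of a non-unital non-associative algebra. -/
def IsDerivation (𝔽 : Type*) [Semiring 𝔽] {A : Type*} [NonUnitalNonAssocSemiring A]
    [Module 𝔽 A] (d : A →ₗ[𝔽] A) : Prop :=
  ∀ a b : A, d (a * b) = d a * b + a * d b

/-- A subset is fully invariant if every algebra endomorphism maps it into itself. -/
def FullyInvariant (𝔽 : Type*) [Semiring 𝔽] {A : Type*} [NonUnitalNonAssocSemiring A]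
    [Module 𝔽 A] (K : Submodule 𝔽 A) : Prop :=
  ∀ φ : A →ₙₐ[𝔽] A, ∀ x ∈ K, φ x ∈ K

/-- The `n`-th power of a non-unital non-associative algebra: the span of all products
of `n` elements (with all possible bracketings), i.e. `A^n = Σ_{i+j=n} A^i·A^j`, `A^1 = A`. -/
def algPow (𝔽 : Type*) [Semiring 𝔽] (A : Type*) [NonUnitalNonAssocSemiring A] [Module 𝔽 A]
    (n : ℕ) : Submodule 𝔽 A :=
  Submodule.span 𝔽 {x | ∃ w : FreeMagma A, w.length = n ∧ FreeMagma.lift id w = x}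

/-- The annihilator `I(A) = {x | xA = Ax = 0}` of a non-unital non-associative algebra. -/
def annIdeal (𝔽 : Type*) [Semiring 𝔽] (A : Type*) [NonUnitalNonAssocSemiring A]
    [Module 𝔽 A] [SMulCommClass 𝔽 A A] [IsScalarTower 𝔽 A A] : Submodule 𝔽 A where
  carrier := {x | ∀ a : A, x * a = 0 ∧ a * x = 0}
  add_mem' := by
    intro x y hx hy a
    exact ⟨by rw [add_mul, (hx a).1, (hy a).1, add_zero],
           by rw [mul_add, (hx a).2, (hy a).2, add_zero]⟩
  zero_mem' := by intro a; simp
  smul_mem' := by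
    intro c x hx a
    exact ⟨by rw [smul_mul_assoc, (hx a).1, smul_zero],
           by rw [mul_smul_comm, (hx a).2, smul_zero]⟩

/-- The ascending annihilator series: `I₀ = 0`, and `I_{k+1}` is the preimage in `A` of the
annihilator of `A/I_k`. -/
def annSeries (𝔽 : Type*) [Semiring 𝔽] (A : Type*) [NonUnitalNonAssocSemiring A]
    [Module 𝔽 A] [SMulCommClass 𝔽 A A] [IsScalarTower 𝔽 A A] : ℕ → Submodule 𝔽 A
  | 0 => ⊥
  | (k+1) =>
    { carrier := {x | ∀ a : A, x * a ∈ annSeries 𝔽 A k ∧ a * x ∈ annSeries 𝔽 A k}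
      add_mem' := by
        intro x y hx hy a
        exact ⟨by rw [add_mul]; exact Submodule.add_mem _ (hx a).1 (hy a).1,
               by rw [mul_add]; exact Submodule.add_mem _ (hx a).2 (hy a).2⟩
      zero_mem' := by
        intro a
        simp only [zero_mul, mul_zero]
        exact ⟨Submodule.zero_mem _, Submodule.zero_mem _⟩
      smul_mem' := by
        intro c x hx a
        exact ⟨by rw [smul_mul_assoc]; exact Submodule.smul_mem _ _ (hx a).1,
               by rw [mul_smul_comm]; exact Submodule.smul_mem _ _ (hx a).2⟩ }

/-- The multidegree of a nonassociative monomial: the finitely supported function recording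
the number of occurrences of each generator. -/
def multideg {X : Type*} : FreeMagma X → (X →₀ ℕ)
  | FreeMagma.of x => Finsupp.single x 1
  | FreeMagma.mul a b => multideg a + multideg b

/-- The multihomogeneous component of multidegree `α` of an element of the free
nonassociative algebra. -/
def mhComponent {𝔽 : Type*} [Semiring 𝔽] {X : Type*}
    (f : FreeNonUnitalNonAssocAlgebra 𝔽 X) (α : X →₀ ℕ) :
    FreeNonUnitalNonAssocAlgebra 𝔽 X :=
  haveI : DecidablePred fun w : FreeMagma X => multideg w = α := fun _ => Classical.dec _
  MonoidAlgebra.ofCoeff (Finsupp.filter (fun w => multideg w = α) (MonoidAlgebra.coeff f))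

/-- A submodule of the free nonassociative algebra is multihomogeneous if it contains all
multihomogeneous components of each of its elements. -/
def Multihomogeneous (𝔽 : Type*) [Semiring 𝔽] {X : Type*}
    (K : Submodule 𝔽 (FreeNonUnitalNonAssocAlgebra 𝔽 X)) : Prop :=
  ∀ f ∈ K, ∀ α : X →₀ ℕ, mhComponent f α ∈ K

/-- `rank_B(V)`: the least cardinality of a subset of `V` generating `V` as a module over
`𝔽[t]`, where `t` acts as the linear operator `B`; equivalently, the least cardinality of a
set whose smallest `B`-invariant subspace is all of `V`. -/
def endRank (𝔽 : Type*) [Semiring 𝔽] {V : Type*} [AddCommMonoid V] [Module 𝔽 V]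
    (B : V →ₗ[𝔽] V) : ℕ :=
  sInf {k | ∃ s : Finset V, s.card = k ∧
    ∀ W : Submodule 𝔽 V, (↑s : Set V) ⊆ W → (∀ x ∈ W, B x ∈ W) → W = ⊤}

/-- For submodules `U, V` of a non-unital non-associative algebra, `mulSub 𝔽 U V` is the
`𝔽`-span of all products `u * v` with `u ∈ U`, `v ∈ V`. -/
def mulSub (𝔽 : Type*) [Semiring 𝔽] {A : Type*} [NonUnitalNonAssocSemiring A] [Module 𝔽 A]
    (U V : Submodule 𝔽 A) : Submodule 𝔽 A :=
  Submodule.span 𝔽 {x | ∃ u ∈ U, ∃ v ∈ V, x = u * v}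

namespace St4

open scoped Classical

variable {𝔽 : Type*} [Field 𝔽] {X : Type*}

abbrev FA (𝔽 : Type*) [Field 𝔽] (X : Type*) := FreeNonUnitalNonAssocAlgebra 𝔽 X

def ew (𝔽 : Type*) [Field 𝔽] {X : Type*} (w : FreeMagma X) : FA 𝔽 X :=
  MonoidAlgebra.single w 1

lemma ew_mul (w w' : FreeMagma X) : (ew 𝔽 w) * ew 𝔽 w' = ew 𝔽 (w * w') := by
  simp [ew, MonoidAlgebra.single_mul_single]

lemma of_eq (x : X) : FreeNonUnitalNonAssocAlgebra.of 𝔽 x = ew 𝔽 (FreeMagma.of x) := rfl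

lemma multideg_mul (w w' : FreeMagma X) : multideg (w * w') = multideg w + multideg w' := rfl

lemma multideg_of (x : X) : multideg (FreeMagma.of x) = Finsupp.single x 1 := rfl

lemma multideg_mul_apply (z : X) (w w' : FreeMagma X) :
    multideg (w * w') z = multideg w z + multideg w' z := by
  rw [multideg_mul]; rfl

def Dword (v : X → FA 𝔽 X) : FreeMagma X → FA 𝔽 X
  | FreeMagma.of x => v x
  | FreeMagma.mul a b => Dword v a * ew 𝔽 b + ew 𝔽 a * Dword v b

lemma Dword_mul (v : X → FA 𝔽 X) (a b : FreeMagma X) :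
    Dword v (a * b) = Dword v a * ew 𝔽 b + ew 𝔽 a * Dword v b := rfl

lemma Dword_of (v : X → FA 𝔽 X) (x : X) : Dword v (FreeMagma.of x) = v x := rfl

def Dlin (v : X → FA 𝔽 X) : FA 𝔽 X →ₗ[𝔽] FA 𝔽 X :=
  Finsupp.linearCombination 𝔽 (Dword v) ∘ₗ (MonoidAlgebra.coeffLinearEquiv 𝔽).toLinearMap

lemma Dlin_single (v : X → FA 𝔽 X) (w : FreeMagma X) (r : 𝔽) :
    Dlin v (MonoidAlgebra.single w r) = r • Dword v w :=
Finsupp.linearCombination_single (R := 𝔽) (v := Dword v) r w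

lemma Dlin_ew (v : X → FA 𝔽 X) (w : FreeMagma X) : Dlin v (ew 𝔽 w) = Dword v w := by
  rw [ew, Dlin_single, one_smul]

lemma Dlin_leibniz (v : X → FA 𝔽 X) (f g : FA 𝔽 X) :
    Dlin v (f * g) = Dlin v f * g + f * Dlin v g := by
  induction f using MonoidAlgebra.induction_linear generalizing g with
  | zero => simp
  | add f₁ f₂ h₁ h₂ =>
    simp only [add_mul, map_add, h₁, h₂]
    abel
  | single w r =>
    induction g using MonoidAlgebra.induction_linear with
    | zero => simp
    | add g₁ g₂ h₁ h₂ =>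
      simp only [mul_add, map_add, h₁, h₂]
      abel
    | single w' r' =>
      rw [MonoidAlgebra.single_mul_single, Dlin_single, Dlin_single, Dlin_single,
        Dword_mul]
      have h1 : (MonoidAlgebra.single w' r' : FA 𝔽 X) = r' • ew 𝔽 w' := by
        simp [ew, MonoidAlgebra.smul_single']
      have h2 : (MonoidAlgebra.single w r : FA 𝔽 X) = r • ew 𝔽 w := by
        simp [ew, MonoidAlgebra.smul_single']
      rw [h1, h2, smul_add, smul_mul_assoc, smul_mul_assoc, mul_smul_comm, mul_smul_comm,
        smul_smul, smul_smul]

instance (z : X) (k : ℕ) : DecidablePred fun w : FreeMagma X => multideg w z = k :=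
  fun _ => inferInstance

/-- The filter keeping words with exactly `k` occurrences of `z`, as a linear map. -/
def FdegL (𝔽 : Type*) [Field 𝔽] {X : Type*} (z : X) (k : ℕ) : FA 𝔽 X →ₗ[𝔽] FA 𝔽 X where
  toFun f := MonoidAlgebra.ofCoeff (Finsupp.filter (fun w : FreeMagma X => multideg w z = k) f.coeff)
  map_add' f g := congrArg MonoidAlgebra.ofCoeff Finsupp.filter_add
  map_smul' c f := congrArg MonoidAlgebra.ofCoeff Finsupp.filter_smul

lemma FdegL_single (z : X) (k : ℕ) (w : FreeMagma X) (r : 𝔽) :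
    FdegL 𝔽 z k (MonoidAlgebra.single w r) =
      if multideg w z = k then MonoidAlgebra.single w r else 0 := by
  by_cases h : multideg w z = k
  · show MonoidAlgebra.ofCoeff (Finsupp.filter (fun w : FreeMagma X => multideg w z = k)
      (Finsupp.single w r)) = _
    rw [Finsupp.filter_single_of_pos (p := fun w : FreeMagma X => multideg w z = k) h, if_pos h]; rfl
  · show MonoidAlgebra.ofCoeff (Finsupp.filter (fun w : FreeMagma X => multideg w z = k)
      (Finsupp.single w r)) = _
    rw [Finsupp.filter_single_of_neg (p := fun w : FreeMagma X => multideg w z = k) h, if_neg h]; rfl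

lemma FdegL_mul_zero (z : X) (f g : FA 𝔽 X) :
    FdegL 𝔽 z 0 (f * g) = FdegL 𝔽 z 0 f * FdegL 𝔽 z 0 g := by
  induction f using MonoidAlgebra.induction_linear generalizing g with
  | zero => simp
  | add f₁ f₂ h₁ h₂ => simp only [add_mul, map_add, h₁, h₂]
  | single w r =>
    induction g using MonoidAlgebra.induction_linear with
    | zero => simp
    | add g₁ g₂ h₁ h₂ => simp only [mul_add, map_add, h₁, h₂]
    | single w' r' =>
      rw [MonoidAlgebra.single_mul_single]
      rw [FdegL_single, FdegL_single, FdegL_single]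
      simp only [multideg_mul_apply]
      by_cases h : multideg w z = 0 <;> by_cases h' : multideg w' z = 0 <;>
        simp [h, h', MonoidAlgebra.single_mul_single]

lemma FdegL_mul_one (z : X) (f g : FA 𝔽 X) :
    FdegL 𝔽 z 1 (f * g) =
      FdegL 𝔽 z 1 f * FdegL 𝔽 z 0 g + FdegL 𝔽 z 0 f * FdegL 𝔽 z 1 g := by
  induction f using MonoidAlgebra.induction_linear generalizing g with
  | zero => simp
  | add f₁ f₂ h₁ h₂ =>
    simp only [add_mul, map_add, h₁, h₂]
    abel
  | single w r =>
    induction g using MonoidAlgebra.induction_linear with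
    | zero => simp
    | add g₁ g₂ h₁ h₂ =>
      simp only [mul_add, map_add, h₁, h₂]
      abel
    | single w' r' =>
      rw [MonoidAlgebra.single_mul_single]
      rw [FdegL_single, FdegL_single, FdegL_single, FdegL_single, FdegL_single]
      simp only [multideg_mul_apply]
      rcases Nat.eq_zero_or_pos (multideg w z) with h | h <;>
        rcases Nat.eq_zero_or_pos (multideg w' z) with h' | h'
      · simp [h, h', MonoidAlgebra.single_mul_single]
      · by_cases h'' : multideg w' z = 1 <;>
          simp [h, h', h'', MonoidAlgebra.single_mul_single, Nat.pos_iff_ne_zero] <;> omega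
      · by_cases h'' : multideg w z = 1 <;>
          simp [h, h', h'', MonoidAlgebra.single_mul_single, Nat.pos_iff_ne_zero] <;> omega
      · have : ¬ (multideg w z + multideg w' z = 1) := by omega
        have h1 : ¬ (multideg w z = 0) := by omega
        have h2 : ¬ (multideg w' z = 0) := by omega
        simp [this, h1, h2]

lemma mhComponent_apply_pos {f : FA 𝔽 X} {α : X →₀ ℕ} {w : FreeMagma X}
    (h : multideg w = α) : (mhComponent f α).coeff w = f.coeff w := by
  exact @Finsupp.filter_apply_pos (FreeMagma X) 𝔽 _ (fun w => multideg w = α)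
    (fun _ => Classical.dec _) f.coeff w h

lemma mhComponent_apply_neg {f : FA 𝔽 X} {α : X →₀ ℕ} {w : FreeMagma X}
    (h : ¬ multideg w = α) : (mhComponent f α).coeff w = 0 := by
  exact @Finsupp.filter_apply_neg (FreeMagma X) 𝔽 _ (fun w => multideg w = α)
    (fun _ => Classical.dec _) f.coeff w h

/-- K being multihomogeneous is stable under filtering by any predicate on multidegrees. -/
lemma filter_mem_of_mh {K : Submodule 𝔽 (FA 𝔽 X)} (hKmh : Multihomogeneous 𝔽 K)
    {f : FA 𝔽 X} (hf : f ∈ K) (p : (X →₀ ℕ) → Prop) [DecidablePred p]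
    [DecidablePred fun w : FreeMagma X => p (multideg w)] :
    MonoidAlgebra.ofCoeff (Finsupp.filter (fun w : FreeMagma X => p (multideg w)) f.coeff) ∈ K := by
  classical
  have key : MonoidAlgebra.ofCoeff (Finsupp.filter (fun w : FreeMagma X => p (multideg w)) f.coeff)
      = ∑ α ∈ (f.coeff.support.image multideg).filter p, mhComponent f α := by
    ext w
    rw [MonoidAlgebra.coeff_ofCoeff, MonoidAlgebra.coeff_sum, Finsupp.filter_apply,
      Finsupp.finset_sum_apply]
    have : ∀ α ∈ (f.coeff.support.image multideg).filter p,
        (mhComponent f α).coeff w = if α = multideg w then f.coeff w else 0 := by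
      intro α _
      by_cases h : α = multideg w
      · rw [if_pos h, mhComponent_apply_pos h.symm]
      · rw [if_neg h, mhComponent_apply_neg fun hc => h hc.symm]
    rw [Finset.sum_congr rfl this, Finset.sum_ite_eq']
    by_cases hw : f.coeff w = 0
    · simp [hw]
    · have hmem : multideg w ∈ f.coeff.support.image multideg :=
        Finset.mem_image_of_mem _ (Finsupp.mem_support_iff.2 hw)
      by_cases hp : p (multideg w)
      · rw [if_pos hp, if_pos (Finset.mem_filter.2 ⟨hmem, hp⟩)]
      · rw [if_neg hp, if_neg (fun hc => hp (Finset.mem_filter.1 hc).2)]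
  rw [key]
  exact Submodule.sum_mem _ fun α _ => hKmh f hf α

lemma FdegL_mem_of_mh {K : Submodule 𝔽 (FA 𝔽 X)} (hKmh : Multihomogeneous 𝔽 K)
    {f : FA 𝔽 X} (hf : f ∈ K) (z : X) (k : ℕ) : FdegL 𝔽 z k f ∈ K := by
  classical
  exact filter_mem_of_mh hKmh hf (fun α => α z = k)

/-- Substitution sending `x ↦ x + z` and fixing all other generators. -/
def subAdd (𝔽 : Type*) [Field 𝔽] {X : Type*} (x z : X) : FA 𝔽 X →ₙₐ[𝔽] FA 𝔽 X :=
  FreeNonUnitalNonAssocAlgebra.lift 𝔽 (fun y =>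
    if y = x then FreeNonUnitalNonAssocAlgebra.of 𝔽 y + FreeNonUnitalNonAssocAlgebra.of 𝔽 z
    else FreeNonUnitalNonAssocAlgebra.of 𝔽 y)

/-- Substitution sending `z ↦ u` and fixing all other generators. -/
def subVal (𝔽 : Type*) [Field 𝔽] {X : Type*} (z : X) (u : FA 𝔽 X) : FA 𝔽 X →ₙₐ[𝔽] FA 𝔽 X :=
  FreeNonUnitalNonAssocAlgebra.lift 𝔽 (fun y =>
    if y = z then u else FreeNonUnitalNonAssocAlgebra.of 𝔽 y)

/-- Generator values of the elementary derivation `x ↦ z`. -/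
def sX (𝔽 : Type*) [Field 𝔽] {X : Type*} (x z : X) : X → FA 𝔽 X := fun y =>
  if y = x then ew 𝔽 (FreeMagma.of z) else 0

/-- Generator values of the derivation `x ↦ u`, all other generators to `0`. -/
def vX (𝔽 : Type*) [Field 𝔽] {X : Type*} (x : X) (u : FA 𝔽 X) : X → FA 𝔽 X := fun y =>
  if y = x then u else 0

lemma multideg_of_apply_eq_zero {x z : X} (h : multideg (FreeMagma.of x) z = 0) : x ≠ z := by
  intro hc
  subst hc
  rw [multideg_of, Finsupp.single_eq_same] at h
  exact one_ne_zero h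

lemma multideg_ofv (x z : X) (h : x ≠ z) : multideg (FreeMagma.of x) z = 0 := by
  rw [multideg_of, Finsupp.single_eq_of_ne' h]

/-- Main induction: the degree-0 and degree-1 (in a fresh `z`) parts of `(x ↦ x + z)`
applied to a `z`-free word. -/
lemma L1 (x z : X) (hxz : x ≠ z) (w : FreeMagma X) (hw : multideg w z = 0) :
    FdegL 𝔽 z 0 (subAdd 𝔽 x z (ew 𝔽 w)) = ew 𝔽 w ∧
    FdegL 𝔽 z 1 (subAdd 𝔽 x z (ew 𝔽 w)) = Dword (sX 𝔽 x z) w := by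
  induction w using FreeMagma.recOnMul with
  | ih1 y =>
    have hyz : y ≠ z := multideg_of_apply_eq_zero hw
    rw [← of_eq, Dword_of]
    rw [subAdd, FreeNonUnitalNonAssocAlgebra.lift_of_apply]
    by_cases hy : y = x
    · subst hy
      rw [if_pos rfl, map_add, map_add, of_eq, of_eq, ew, ew, FdegL_single, FdegL_single,
        FdegL_single, FdegL_single]
      have h1 : multideg (FreeMagma.of y) z = 0 := multideg_ofv y z hyz
      have h2 : multideg (FreeMagma.of z) z = 1 := by
        rw [multideg_of, Finsupp.single_eq_same]
      simp [h1, h2, sX, ew]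
    · rw [if_neg hy, of_eq, ew, FdegL_single, FdegL_single]
      have h1 := multideg_ofv y z hyz
      simp [h1, sX, hy, ew]
  | ih2 a b iha ihb =>
    rw [multideg_mul_apply] at hw
    have ha : multideg a z = 0 := by omega
    have hb : multideg b z = 0 := by omega
    obtain ⟨ha0, ha1⟩ := iha ha
    obtain ⟨hb0, hb1⟩ := ihb hb
    have hmul : (ew 𝔽 (a * b) : FA 𝔽 X) = ew 𝔽 a * ew 𝔽 b := (ew_mul a b).symm
    rw [hmul, map_mul, FdegL_mul_zero, FdegL_mul_one, ha0, ha1, hb0, hb1, Dword_mul]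
    exact ⟨rfl, rfl⟩

lemma subVal_fix (z : X) (u : FA 𝔽 X) (w : FreeMagma X) (hw : multideg w z = 0) :
    subVal 𝔽 z u (ew 𝔽 w) = ew 𝔽 w := by
  induction w using FreeMagma.recOnMul with
  | ih1 y =>
    have hyz : y ≠ z := multideg_of_apply_eq_zero hw
    rw [← of_eq, subVal, FreeNonUnitalNonAssocAlgebra.lift_of_apply, if_neg hyz, of_eq]
  | ih2 a b iha ihb =>
    rw [multideg_mul_apply] at hw
    rw [← ew_mul, map_mul, iha (by omega), ihb (by omega)]

lemma L2 (x z : X) (u : FA 𝔽 X) (w : FreeMagma X) (hw : multideg w z = 0) :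
    subVal 𝔽 z u (Dword (sX 𝔽 x z) w) = Dword (vX 𝔽 x u) w := by
  induction w using FreeMagma.recOnMul with
  | ih1 y =>
    rw [Dword_of, Dword_of, sX, vX]
    by_cases hy : y = x
    · rw [if_pos hy, if_pos hy, ← of_eq, subVal,
        FreeNonUnitalNonAssocAlgebra.lift_of_apply, if_pos rfl]
    · rw [if_neg hy, if_neg hy, map_zero]
  | ih2 a b iha ihb =>
    rw [multideg_mul_apply] at hw
    have ha : multideg a z = 0 := by omega
    have hb : multideg b z = 0 := by omega
    rw [Dword_mul, Dword_mul, map_add, map_mul, map_mul, iha ha, ihb hb,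
      subVal_fix z u a ha, subVal_fix z u b hb]

lemma sum_words (v : X → FA 𝔽 X) (S : Finset X) (w : FreeMagma X)
    (hw : (multideg w).support ⊆ S) :
    Dword v w = ∑ x ∈ S, Dword (vX 𝔽 x (v x)) w := by
  classical
  induction w using FreeMagma.recOnMul with
  | ih1 y =>
    have hy : y ∈ S := by
      apply hw
      rw [multideg_of]
      simp
    rw [Dword_of]
    have : ∀ x ∈ S, Dword (vX 𝔽 x (v x)) (FreeMagma.of y) = if y = x then v x else 0 :=
      fun x _ => by rw [Dword_of, vX]
    rw [Finset.sum_congr rfl this, Finset.sum_ite_eq, if_pos hy]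
  | ih2 a b iha ihb =>
    have hsub : ∀ y, y ∈ (multideg a).support ∪ (multideg b).support → y ∈ S := by
      intro y hy
      apply hw
      rw [multideg_mul, Finsupp.mem_support_iff]
      simp only [Finset.mem_union, Finsupp.mem_support_iff] at hy
      rw [Finsupp.add_apply]
      omega
    have ha : (multideg a).support ⊆ S := fun y hy => hsub y (Finset.mem_union_left _ hy)
    have hb : (multideg b).support ⊆ S := fun y hy => hsub y (Finset.mem_union_right _ hy)
    rw [Dword_mul, iha ha, ihb hb, Finset.sum_mul, Finset.mul_sum, ← Finset.sum_add_distrib]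
    exact Finset.sum_congr rfl fun x _ => by rw [Dword_mul]

lemma linear_eq_on {M : Type*} [AddCommMonoid M] [Module 𝔽 M]
    (T T' : FA 𝔽 X →ₗ[𝔽] M) (f : FA 𝔽 X)
    (h : ∀ w ∈ f.coeff.support, T (ew 𝔽 w) = T' (ew 𝔽 w)) : T f = T' f := by
  conv_lhs => rw [← MonoidAlgebra.sum_coeff_single f]
  conv_rhs => rw [← MonoidAlgebra.sum_coeff_single f]
  rw [map_finsuppSum, map_finsuppSum]
  refine Finset.sum_congr rfl fun w hw => ?_
  have hs : (MonoidAlgebra.single w (f.coeff w) : FA 𝔽 X) = f.coeff w • ew 𝔽 w := by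
    rw [ew, MonoidAlgebra.smul_single', mul_one]
  show T (MonoidAlgebra.single w (f.coeff w)) = T' (MonoidAlgebra.single w (f.coeff w))
  rw [hs, map_smul, map_smul, h w hw]

/-- Every derivation of the free algebra determined by generator values preserves a fully
invariant multihomogeneous submodule. -/
lemma D_mem_K [Infinite X] {K : Submodule 𝔽 (FA 𝔽 X)}
    (hKfi : FullyInvariant 𝔽 K) (hKmh : Multihomogeneous 𝔽 K)
    (v : X → FA 𝔽 X) {f : FA 𝔽 X} (hf : f ∈ K) : Dlin v f ∈ K := by
  classical
  set S : Finset X := f.coeff.support.sup (fun w => (multideg w).support) with hS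
  obtain ⟨z, hz⟩ := Infinite.exists_notMem_finset S
  have hzfree : ∀ w ∈ f.coeff.support, multideg w z = 0 := by
    intro w hw
    by_contra h
    exact hz (Finset.mem_of_subset (Finset.le_sup hw) (Finsupp.mem_support_iff.2 h))
  have h1 : Dlin v f = ∑ x ∈ S, Dlin (vX 𝔽 x (v x)) f := by
    have heq := linear_eq_on (Dlin v) (∑ x ∈ S, Dlin (vX 𝔽 x (v x))) f (fun w hw => by
      rw [Dlin_ew, LinearMap.sum_apply, sum_words v S w (by
        intro y hy
        exact Finset.mem_of_subset (Finset.le_sup (f := fun w => (multideg w).support) hw) hy)]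
      exact Finset.sum_congr rfl fun x _ => (Dlin_ew _ w).symm)
    rw [heq, LinearMap.sum_apply]
  rw [h1]
  refine Submodule.sum_mem _ fun x hx => ?_
  have hxz : x ≠ z := fun h => hz (h ▸ hx)
  have h3 : Dlin (sX 𝔽 x z) f = FdegL 𝔽 z 1 (subAdd 𝔽 x z f) := by
    have heq := linear_eq_on (Dlin (sX 𝔽 x z))
      ((FdegL 𝔽 z 1).comp (subAdd 𝔽 x z : FA 𝔽 X →ₗ[𝔽] FA 𝔽 X)) f (fun w hw => by
        show Dlin (sX 𝔽 x z) (ew 𝔽 w) = FdegL 𝔽 z 1 (subAdd 𝔽 x z (ew 𝔽 w))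
        rw [Dlin_ew, (L1 x z hxz w (hzfree w hw)).2])
    rw [heq]; rfl
  have hs : Dlin (sX 𝔽 x z) f ∈ K := by
    rw [h3]
    exact FdegL_mem_of_mh hKmh (hKfi (subAdd 𝔽 x z) f hf) z 1
  have h2 : Dlin (vX 𝔽 x (v x)) f = subVal 𝔽 z (v x) (Dlin (sX 𝔽 x z) f) := by
    have heq := linear_eq_on ((subVal 𝔽 z (v x) : FA 𝔽 X →ₗ[𝔽] FA 𝔽 X).comp (Dlin (sX 𝔽 x z)))
      (Dlin (vX 𝔽 x (v x))) f (fun w hw => by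
        show subVal 𝔽 z (v x) (Dlin (sX 𝔽 x z) (ew 𝔽 w)) = Dlin (vX 𝔽 x (v x)) (ew 𝔽 w)
        rw [Dlin_ew, Dlin_ew]
        exact L2 x z (v x) w (hzfree w hw))
    rw [← heq]; rfl
  rw [h2]
  exact hKfi (subVal 𝔽 z (v x)) _ hs

end St4

/-- If `F = 𝓕(X)/K` (with `K` fully invariant multihomogeneous), `P = F/I`
with canonical surjection `ε : F → P`, then every derivation `d` of `P` lifts to a
derivation `d̄` of `F` with `ε ∘ d̄ = d ∘ ε`; in particular `d̄` maps `ker ε` into itself.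
Here `F` and `P` are presented via surjective homomorphisms with prescribed kernels. -/
theorem statement4 (𝔽 : Type*) [Field 𝔽] (X : Type*) [Countable X] [Infinite X]
    (K : Submodule 𝔽 (FreeNonUnitalNonAssocAlgebra 𝔽 X))
    (hKideal : IsAlgIdeal 𝔽 K) (hKfi : FullyInvariant 𝔽 K) (hKmh : Multihomogeneous 𝔽 K)
    (F : Type*) [NonUnitalNonAssocSemiring F] [Module 𝔽 F]
    [SMulCommClass 𝔽 F F] [IsScalarTower 𝔽 F F]
    (π : FreeNonUnitalNonAssocAlgebra 𝔽 X →ₙₐ[𝔽] F)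
    (hπ : Function.Surjective π) (hπker : ∀ x, π x = 0 ↔ x ∈ K)
    (P : Type*) [NonUnitalNonAssocSemiring P] [Module 𝔽 P]
    [SMulCommClass 𝔽 P P] [IsScalarTower 𝔽 P P]
    (I : Submodule 𝔽 F) (hI : IsAlgIdeal 𝔽 I)
    (ε : F →ₙₐ[𝔽] P) (hε : Function.Surjective ε) (hεker : ∀ x, ε x = 0 ↔ x ∈ I)
    (d : P →ₗ[𝔽] P) (hd : IsDerivation 𝔽 d) :
    ∃ dbar : F →ₗ[𝔽] F, IsDerivation 𝔽 dbar ∧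
      (ε : F →ₗ[𝔽] P).comp dbar = d.comp (ε : F →ₗ[𝔽] P) ∧
      ∀ x : F, ε x = 0 → ε (dbar x) = 0 := by
  classical
  set δ : FreeNonUnitalNonAssocAlgebra 𝔽 X →ₙₐ[𝔽] P := ε.comp π with hδdef
  have hδ : Function.Surjective δ := by
    have h : ⇑δ = ⇑ε ∘ ⇑π := rfl
    rw [h]
    exact hε.comp hπ
  set v : X → FreeNonUnitalNonAssocAlgebra 𝔽 X := fun x =>
    surjInv hδ (d (δ (FreeNonUnitalNonAssocAlgebra.of 𝔽 x))) with hvdef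
  have hv : ∀ x, δ (v x) = d (δ (FreeNonUnitalNonAssocAlgebra.of 𝔽 x)) := fun x =>
    surjInv_eq hδ _
  have hDK : ∀ g ∈ K, St4.Dlin v g ∈ K := fun g hg => St4.D_mem_K hKfi hKmh v hg
  have hδD : ∀ g : FreeNonUnitalNonAssocAlgebra 𝔽 X, δ (St4.Dlin v g) = d (δ g) := by
    have hword : ∀ w : FreeMagma X, δ (St4.Dword v w) = d (δ (St4.ew 𝔽 w)) := by
      intro w
      induction w using FreeMagma.recOnMul with
      | ih1 x =>
        rw [St4.Dword_of, ← St4.of_eq]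
        exact hv x
      | ih2 a b iha ihb =>
        rw [St4.Dword_mul, ← St4.ew_mul, map_add, map_mul, map_mul, map_mul, iha, ihb,
          hd (δ (St4.ew 𝔽 a)) (δ (St4.ew 𝔽 b))]
    intro g
    have := St4.linear_eq_on ((δ : FreeNonUnitalNonAssocAlgebra 𝔽 X →ₗ[𝔽] P).comp (St4.Dlin v))
      (d.comp (δ : FreeNonUnitalNonAssocAlgebra 𝔽 X →ₗ[𝔽] P)) g (fun w _ => by
        show δ (St4.Dlin v (St4.ew 𝔽 w)) = d (δ (St4.ew 𝔽 w))
        rw [St4.Dlin_ew]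
        exact hword w)
    exact this
  letI : AddCommGroup F := Module.addCommMonoidToAddCommGroup 𝔽
  obtain ⟨σ, hσ⟩ := (π : FreeNonUnitalNonAssocAlgebra 𝔽 X →ₗ[𝔽] F).exists_rightInverse_of_surjective
    (LinearMap.range_eq_top.2 hπ)
  have key : ∀ g : FreeNonUnitalNonAssocAlgebra 𝔽 X,
      ((π : FreeNonUnitalNonAssocAlgebra 𝔽 X →ₗ[𝔽] F) ∘ₗ (St4.Dlin v) ∘ₗ σ) (π g) = π (St4.Dlin v g) := by
    intro g
    have hg : π (σ (π g)) = π g := by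
      have h := LinearMap.congr_fun hσ (π g)
      simpa using h
    have hdiff : σ (π g) - g ∈ K := by
      apply (hπker _).1
      rw [map_sub, hg, sub_self]
    have h0 : π (St4.Dlin v (σ (π g) - g)) = 0 := (hπker _).2 (hDK _ hdiff)
    have hsplit : σ (π g) = g + (σ (π g) - g) := (add_sub_cancel g (σ (π g))).symm
    show π (St4.Dlin v (σ (π g))) = π (St4.Dlin v g)
    rw [hsplit, map_add, map_add, h0, add_zero]
  refine ⟨(π : FreeNonUnitalNonAssocAlgebra 𝔽 X →ₗ[𝔽] F) ∘ₗ (St4.Dlin v) ∘ₗ σ, ?_, ?_, ?_⟩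
  · -- derivation
    intro a b
    obtain ⟨g1, rfl⟩ := hπ a
    obtain ⟨g2, rfl⟩ := hπ b
    have hmul : π g1 * π g2 = π (g1 * g2) := (map_mul π g1 g2).symm
    rw [hmul, key, key, key, St4.Dlin_leibniz, map_add, map_mul, map_mul]
  · -- compatibility
    apply LinearMap.ext
    intro a
    obtain ⟨g, rfl⟩ := hπ a
    show ε (((π : FreeNonUnitalNonAssocAlgebra 𝔽 X →ₗ[𝔽] F) ∘ₗ (St4.Dlin v) ∘ₗ σ) (π g)) = d (ε (π g))
    rw [key]
    exact hδD g
  · -- kernel preservation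
    intro x hx
    obtain ⟨g, rfl⟩ := hπ x
    show ε (((π : FreeNonUnitalNonAssocAlgebra 𝔽 X →ₗ[𝔽] F) ∘ₗ (St4.Dlin v) ∘ₗ σ) (π g)) = 0
    rw [key]
    have : ε (π (St4.Dlin v g)) = d (ε (π g)) := hδD g
    rw [this]
    have hx' : ε (π g) = 0 := hx
    rw [hx', map_zero]
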